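/- arXiv:math/0512563 — 3 statements merged into one kernel-verified Lean document; each statement's English description precedes it below -/
import Mathlib

section
/- For any w ∈ k^× and n ∈ ℕ, the formulas K·m_i = wq^{n−2i}·m_i, K̃·m_i = w⁻¹q^{n−2i}·m_i, F·m_i = m_{i+1} (with m_{n+1} := 0), E·m_0 = 0, and E·m_i = w·[i]_q·[n+1−i]_q·m_{i−1} for 1 ≤ i ≤ n define a D_q-module structure L(w,n) on the (n+1)-dimensional k-vector space with basis m_0,…,m_n: there is a unique k-algebra homomorphism from D_q to its endomorphism algebra with these values on the generators (and K⁻¹, K̃⁻¹ going to the inverse operators). If moreover q is not a root of unity, then L(w,n) is a simple D_q-module. -/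
noncomputable section

/-- Generators of the quantum double `D_q`. -/
inductive DGen : Type
  | E | F | K | Kinv | Kt | Ktinv
  deriving DecidableEq

/-- The defining relations of `D_q`. -/
inductive DRel (k : Type) [Field k] (q : k) :
    FreeAlgebra k DGen → FreeAlgebra k DGen → Prop
  | KE : DRel k q (FreeAlgebra.ι k DGen.K * FreeAlgebra.ι k DGen.E)
      ((q ^ 2) • (FreeAlgebra.ι k DGen.E * FreeAlgebra.ι k DGen.K))
  | KF : DRel k q (FreeAlgebra.ι k DGen.K * FreeAlgebra.ι k DGen.F)
      (((q ^ 2)⁻¹) • (FreeAlgebra.ι k DGen.F * FreeAlgebra.ι k DGen.K))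
  | KtE : DRel k q (FreeAlgebra.ι k DGen.Kt * FreeAlgebra.ι k DGen.E)
      ((q ^ 2) • (FreeAlgebra.ι k DGen.E * FreeAlgebra.ι k DGen.Kt))
  | KtF : DRel k q (FreeAlgebra.ι k DGen.Kt * FreeAlgebra.ι k DGen.F)
      (((q ^ 2)⁻¹) • (FreeAlgebra.ι k DGen.F * FreeAlgebra.ι k DGen.Kt))
  | KKinv : DRel k q (FreeAlgebra.ι k DGen.K * FreeAlgebra.ι k DGen.Kinv) 1
  | KinvK : DRel k q (FreeAlgebra.ι k DGen.Kinv * FreeAlgebra.ι k DGen.K) 1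
  | KtKtinv : DRel k q (FreeAlgebra.ι k DGen.Kt * FreeAlgebra.ι k DGen.Ktinv) 1
  | KtinvKt : DRel k q (FreeAlgebra.ι k DGen.Ktinv * FreeAlgebra.ι k DGen.Kt) 1
  | KKt : DRel k q (FreeAlgebra.ι k DGen.K * FreeAlgebra.ι k DGen.Kt)
      (FreeAlgebra.ι k DGen.Kt * FreeAlgebra.ι k DGen.K)
  | EF : DRel k q (FreeAlgebra.ι k DGen.E * FreeAlgebra.ι k DGen.F)
      (FreeAlgebra.ι k DGen.F * FreeAlgebra.ι k DGen.E +
        ((q - q⁻¹)⁻¹) • (FreeAlgebra.ι k DGen.K - FreeAlgebra.ι k DGen.Ktinv))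

/-- The quantum double `D_q` of `U_q(sl2)^{≤0}`, presented by generators and relations. -/
abbrev Dq (k : Type) [Field k] (q : k) := RingQuot (DRel k q)

def DE (k : Type) [Field k] (q : k) : Dq k q :=
  RingQuot.mkAlgHom k (DRel k q) (FreeAlgebra.ι k DGen.E)
def DF (k : Type) [Field k] (q : k) : Dq k q :=
  RingQuot.mkAlgHom k (DRel k q) (FreeAlgebra.ι k DGen.F)
def DK (k : Type) [Field k] (q : k) : Dq k q :=
  RingQuot.mkAlgHom k (DRel k q) (FreeAlgebra.ι k DGen.K)
def DKinv (k : Type) [Field k] (q : k) : Dq k q :=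
  RingQuot.mkAlgHom k (DRel k q) (FreeAlgebra.ι k DGen.Kinv)
def DKt (k : Type) [Field k] (q : k) : Dq k q :=
  RingQuot.mkAlgHom k (DRel k q) (FreeAlgebra.ι k DGen.Kt)
def DKtinv (k : Type) [Field k] (q : k) : Dq k q :=
  RingQuot.mkAlgHom k (DRel k q) (FreeAlgebra.ι k DGen.Ktinv)

/-- The quantum integer `[n]_q = (qⁿ - q⁻ⁿ)/(q - q⁻¹)`. -/
def qint (k : Type) [Field k] (q : k) (n : ℕ) : k := (q ^ n - q⁻¹ ^ n) / (q - q⁻¹)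

/-- The quantum factorial `[n]_q!`. -/
def qfact (k : Type) [Field k] (q : k) : ℕ → k
  | 0 => 1
  | n + 1 => qfact k q n * qint k q (n + 1)

/-- The Gaussian binomial coefficient `[m choose n]_q`. -/
def qbinom (k : Type) [Field k] (q : k) (m n : ℕ) : k :=
  qfact k q m / (qfact k q n * qfact k q (m - n))

/-- The element `[K,K̃;c;t] = ∏_{s=1}^t (K q^{c-s+1} - K̃⁻¹ q^{-c+s-1})/(q^s - q^{-s})` of `D_q`. -/
def KKtc (k : Type) [Field k] (q : k) (c : ℤ) : ℕ → Dq k q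
  | 0 => 1
  | t + 1 =>
      KKtc k q c t *
        ((q ^ ((t : ℤ) + 1) - q ^ (-((t : ℤ) + 1)))⁻¹ •
          (q ^ (c - (t : ℤ)) • DK k q - q ^ ((t : ℤ) - c) • DKtinv k q))

/-- Action of `K` on `L(w,n)`: `K·m_i = wq^{n−2i}·m_i`. -/
def lK (k : Type) [Field k] (q w : k) (n : ℕ) :
    (Fin (n + 1) →₀ k) →ₗ[k] (Fin (n + 1) →₀ k) :=
  Finsupp.lift (Fin (n + 1) →₀ k) k (Fin (n + 1)) fun i =>
    (w * q ^ ((n : ℤ) - 2 * ((i : ℕ) : ℤ))) • Finsupp.single i 1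

/-- Action of `K⁻¹` on `L(w,n)` (the inverse operator of `lK`). -/
def lKinv (k : Type) [Field k] (q w : k) (n : ℕ) :
    (Fin (n + 1) →₀ k) →ₗ[k] (Fin (n + 1) →₀ k) :=
  Finsupp.lift (Fin (n + 1) →₀ k) k (Fin (n + 1)) fun i =>
    ((w * q ^ ((n : ℤ) - 2 * ((i : ℕ) : ℤ)))⁻¹) • Finsupp.single i 1

/-- Action of `K̃` on `L(w,n)`: `K̃·m_i = w⁻¹q^{n−2i}·m_i`. -/
def lKt (k : Type) [Field k] (q w : k) (n : ℕ) :
    (Fin (n + 1) →₀ k) →ₗ[k] (Fin (n + 1) →₀ k) :=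
  Finsupp.lift (Fin (n + 1) →₀ k) k (Fin (n + 1)) fun i =>
    (w⁻¹ * q ^ ((n : ℤ) - 2 * ((i : ℕ) : ℤ))) • Finsupp.single i 1

/-- Action of `K̃⁻¹` on `L(w,n)` (the inverse operator of `lKt`). -/
def lKtinv (k : Type) [Field k] (q w : k) (n : ℕ) :
    (Fin (n + 1) →₀ k) →ₗ[k] (Fin (n + 1) →₀ k) :=
  Finsupp.lift (Fin (n + 1) →₀ k) k (Fin (n + 1)) fun i =>
    ((w⁻¹ * q ^ ((n : ℤ) - 2 * ((i : ℕ) : ℤ)))⁻¹) • Finsupp.single i 1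

/-- Action of `F` on `L(w,n)`: `F·m_i = m_{i+1}` with `m_{n+1} := 0`. -/
def lF (k : Type) [Field k] (n : ℕ) :
    (Fin (n + 1) →₀ k) →ₗ[k] (Fin (n + 1) →₀ k) :=
  Finsupp.lift (Fin (n + 1) →₀ k) k (Fin (n + 1)) fun i =>
    if h : (i : ℕ) + 1 < n + 1 then Finsupp.single (⟨(i : ℕ) + 1, h⟩ : Fin (n + 1)) 1 else 0

/-- Action of `E` on `L(w,n)`: `E·m_0 = 0`, `E·m_i = w·[i]_q·[n+1−i]_q·m_{i−1}`. -/
def lE (k : Type) [Field k] (q w : k) (n : ℕ) :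
    (Fin (n + 1) →₀ k) →ₗ[k] (Fin (n + 1) →₀ k) :=
  Finsupp.lift (Fin (n + 1) →₀ k) k (Fin (n + 1)) fun i =>
    if (i : ℕ) = 0 then 0
    else
      (w * qint k q (i : ℕ) * qint k q (n + 1 - (i : ℕ))) •
        Finsupp.single
          (⟨(i : ℕ) - 1, Nat.lt_of_le_of_lt (Nat.sub_le _ _) i.isLt⟩ : Fin (n + 1)) 1

/-- `ρ` realizes the simple module `L(w,n)` on `Fin (n+1) →₀ k`. -/
def LCond (k : Type) [Field k] (q w : k) (n : ℕ)
    (ρ : Dq k q →ₐ[k] Module.End k (Fin (n + 1) →₀ k)) : Prop :=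
  ρ (DE k q) = lE k q w n ∧ ρ (DF k q) = lF k n ∧
  ρ (DK k q) = lK k q w n ∧ ρ (DKinv k q) = lKinv k q w n ∧
  ρ (DKt k q) = lKt k q w n ∧ ρ (DKtinv k q) = lKtinv k q w n

/-! The Cartan generators `K`, `K⁻¹`, `K̃`, `K̃⁻¹` act diagonally on the basis `m_i`, with weights
`w^{±1} q^{n-2i}` and their inverses, while `E` lowers and `F` raises the index. Hence each defining
relation of `D_q` reduces to a scalar identity on every `m_i`; the only nontrivial one, coming from
`EF - FE`, is `[i+1][n-i] - [i][n+1-i] = [n-2i]`. Uniqueness holds because `D_q` is generated by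
its six generators.

If `q` is not a root of unity, the weights of `K` are pairwise distinct, so a nonzero submodule
stable under `K` contains some basis vector `m_i`. Since `E m_i = w [i] [n+1-i] m_{i-1}` with
nonzero coefficient, it contains `m_0`, and applying `F` repeatedly it contains every `m_j`. -/

open Finsupp (single lhom_ext smul_single smul_single_one single_mul)

section Diagonal

variable {k ι : Type*} [Field k]

def diagEnd (c : ι → k) : Module.End k (ι →₀ k) :=
  Finsupp.lift (ι →₀ k) k ι fun i => c i • single i 1

@[simp]
lemma diagEnd_single (c : ι → k) (i : ι) (b : k) :
    diagEnd c (single i b) = single i (c i * b) := by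
  simp [diagEnd, smul_single, mul_comm]

lemma diagEnd_apply (c : ι → k) (v : ι →₀ k) (j : ι) : diagEnd c v j = c j * v j := by
  induction v using Finsupp.induction_linear with
  | zero => simp
  | add f g hf hg => simp [hf, hg, mul_add]
  | single i b => by_cases h : i = j <;> simp [h]

lemma diagEnd_mul_inv {c : ι → k} (hc : ∀ i, c i ≠ 0) : diagEnd c * diagEnd c⁻¹ = 1 :=
  lhom_ext fun i b => by simp [Module.End.mul_apply, hc, -single_mul]

lemma diagEnd_inv_mul {c : ι → k} (hc : ∀ i, c i ≠ 0) : diagEnd c⁻¹ * diagEnd c = 1 :=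
  lhom_ext fun i b => by simp [Module.End.mul_apply, hc, -single_mul]

lemma diagEnd_mul_comm (c d : ι → k) : diagEnd c * diagEnd d = diagEnd d * diagEnd c :=
  lhom_ext fun i b => by simp [Module.End.mul_apply, mul_left_comm, -single_mul]

lemma diagEnd_mul_eq_smul_mul {c : ι → k} {r : k} {T : Module.End k (ι →₀ k)}
    (hT : ∀ i, diagEnd c (T (single i 1)) = (r * c i) • T (single i 1)) :
    diagEnd c * T = r • (T * diagEnd c) :=
  lhom_ext fun i b => by
    simp only [Module.End.mul_apply, LinearMap.smul_apply, diagEnd_single,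
      ← smul_single_one i b, ← smul_single_one i (c i), mul_one, map_smul, hT, smul_smul]

lemma single_mem_of_mem_support {c : ι → k} (hc : Function.Injective c)
    {W : Submodule k (ι →₀ k)} (hW : ∀ v ∈ W, diagEnd c v ∈ W)
    {v : ι →₀ k} (hv : v ∈ W) {i : ι} (hi : i ∈ v.support) : single i 1 ∈ W := by
  classical
  induction hN : v.support.card using Nat.strong_induction_on generalizing v with
  | _ N ih =>
    by_cases hsupp : v.support = {i}
    · obtain ⟨hvi, hv_eq⟩ := Finsupp.support_eq_singleton.1 hsupp
      rwa [hv_eq, ← smul_single_one, Submodule.smul_mem_iff _ hvi] at hv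
    obtain ⟨j, hj, hji⟩ : ∃ j ∈ v.support, j ≠ i := by
      simpa [Finset.eq_singleton_iff_unique_mem, hi] using hsupp
    -- Subtracting `c j • v` kills the `j`-component and, `c` being injective, keeps all others.
    have hsupp_sub : (diagEnd c v - c j • v).support = v.support.erase j := by
      ext a
      simp [diagEnd_apply, ← sub_mul, sub_eq_zero, hc.eq_iff]
    refine ih _ ?_ (W.sub_mem (hW v hv) (W.smul_mem (c j) hv)) ?_ rfl
    · rw [← hN, hsupp_sub]
      exact Finset.card_erase_lt_of_mem hj
    · rw [hsupp_sub]
      exact Finset.mem_erase.2 ⟨hji.symm, hi⟩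

lemma Submodule.eq_top_of_forall_single_mem {W : Submodule k (ι →₀ k)}
    (h : ∀ i, single i 1 ∈ W) : W = ⊤ :=
  eq_top_iff.2 fun v _ => by
    rw [← v.sum_single]
    exact Submodule.finsuppSum_mem _ _ _ _ fun i _ => by
      rw [← smul_single_one]
      exact W.smul_mem _ (h i)

end Diagonal

section LModule

variable {k : Type} [Field k] {q w : k} {n : ℕ}

lemma sub_inv_ne_zero_of_sq_ne_one (hq0 : q ≠ 0) (hq1 : q ^ 2 ≠ 1) : q - q⁻¹ ≠ 0 := fun h =>
  hq1 (by rw [sq]; nth_rw 2 [sub_eq_zero.1 h]; exact mul_inv_cancel₀ hq0)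

lemma qint_zero : qint k q 0 = 0 := by simp [qint]

lemma qint_succ_mul_qint_sub_qint_mul_qint_succ (hq0 : q ≠ 0) (hq1 : q ^ 2 ≠ 1) (a b : ℕ) :
    qint k q (a + 1) * qint k q b - qint k q a * qint k q (b + 1)
      = (q ^ ((b : ℤ) - a) - q ^ ((a : ℤ) - b)) / (q - q⁻¹) := by
  have hq := sub_inv_ne_zero_of_sq_ne_one hq0 hq1
  have hzpow (c d : ℕ) : q ^ ((c : ℤ) - d) = q ^ c * q⁻¹ ^ d := by
    rw [zpow_sub₀ hq0, zpow_natCast, zpow_natCast, div_eq_mul_inv, inv_pow]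
  rw [hzpow, hzpow]
  unfold qint
  generalize q⁻¹ = r at *
  field_simp
  ring

def lWeight (q w : k) (n : ℕ) (i : Fin (n + 1)) : k := w * q ^ ((n : ℤ) - 2 * ((i : ℕ) : ℤ))

lemma lWeight_ne_zero (hq0 : q ≠ 0) (hw : w ≠ 0) (i : Fin (n + 1)) : lWeight q w n i ≠ 0 :=
  mul_ne_zero hw (zpow_ne_zero _ hq0)

lemma lWeight_castSucc (hq0 : q ≠ 0) (i : Fin n) :
    lWeight q w n i.castSucc = q ^ 2 * lWeight q w n i.succ := by
  simp only [lWeight, Fin.val_castSucc, Fin.val_succ]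
  rw [show (n : ℤ) - 2 * (i : ℕ) = 2 + ((n : ℤ) - 2 * ((i + 1 : ℕ) : ℤ)) by push_cast; ring,
    zpow_add₀ hq0, zpow_ofNat]
  ring

lemma lK_eq : lK k q w n = diagEnd (lWeight q w n) := rfl
lemma lKinv_eq : lKinv k q w n = diagEnd (lWeight q w n)⁻¹ := rfl
lemma lKt_eq : lKt k q w n = diagEnd (lWeight q w⁻¹ n) := rfl
lemma lKtinv_eq : lKtinv k q w n = diagEnd (lWeight q w⁻¹ n)⁻¹ := rfl

lemma lF_single_castSucc (i : Fin n) (b : k) : lF k n (single i.castSucc b) = single i.succ b := by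
  rw [lF, Finsupp.lift_apply, Finsupp.sum_single_index (by simp), dif_pos (by simp),
    smul_single_one]
  rfl

lemma lF_single_last (b : k) : lF k n (single (Fin.last n) b) = 0 := by
  simp [lF]

lemma lE_single_zero (b : k) : lE k q w n (single 0 b) = 0 := by
  simp [lE]

lemma lE_single_succ (i : Fin n) (b : k) :
    lE k q w n (single i.succ b)
      = single i.castSucc (w * qint k q (i + 1) * qint k q (n - i) * b) := by
  rw [lE, Finsupp.lift_apply, Finsupp.sum_single_index (by simp), if_neg (by simp), smul_smul,
    smul_single_one]
  congr 1
  rw [Fin.val_succ, Nat.add_sub_add_right]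
  ring

lemma lE_mul_lF :
    lE k q w n * lF k n
      = diagEnd fun i : Fin (n + 1) => w * qint k q (i + 1) * qint k q (n - i) := by
  refine lhom_ext fun i b => ?_
  induction i using Fin.lastCases with
  | last => simp [Module.End.mul_apply, lF_single_last, qint_zero]
  | cast i => simp [Module.End.mul_apply, lF_single_castSucc, lE_single_succ, -single_mul]

lemma lF_mul_lE :
    lF k n * lE k q w n
      = diagEnd fun i : Fin (n + 1) => w * qint k q i * qint k q (n + 1 - i) := by
  refine lhom_ext fun i b => ?_
  induction i using Fin.cases with
  | zero => simp [Module.End.mul_apply, lE_single_zero, qint_zero]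
  | succ i => simp [Module.End.mul_apply, lF_single_castSucc, lE_single_succ, -single_mul]

lemma diagEnd_lWeight_lE (hq0 : q ≠ 0) (u : k) (i : Fin (n + 1)) :
    diagEnd (lWeight q u n) (lE k q w n (single i 1))
      = (q ^ 2 * lWeight q u n i) • lE k q w n (single i 1) := by
  induction i using Fin.cases with
  | zero => simp [lE_single_zero]
  | succ i => simp [lE_single_succ, lWeight_castSucc hq0, smul_single, -single_mul, mul_assoc]

lemma diagEnd_lWeight_lF (hq0 : q ≠ 0) (u : k) (i : Fin (n + 1)) :
    diagEnd (lWeight q u n) (lF k n (single i 1))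
      = ((q ^ 2)⁻¹ * lWeight q u n i) • lF k n (single i 1) := by
  induction i using Fin.lastCases with
  | last => simp [lF_single_last]
  | cast i =>
    simp [lF_single_castSucc, lWeight_castSucc hq0, smul_single, -single_mul, pow_ne_zero 2 hq0]

lemma lE_mul_lF_eq_lF_mul_lE_add (hq0 : q ≠ 0) (hq1 : q ^ 2 ≠ 1) :
    lE k q w n * lF k n
      = lF k n * lE k q w n + (q - q⁻¹)⁻¹ • (lK k q w n - lKtinv k q w n) := by
  rw [lE_mul_lF, lF_mul_lE, lK_eq, lKtinv_eq]
  refine lhom_ext fun i b => ?_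
  have hi : (i : ℕ) ≤ n := Nat.lt_succ_iff.1 i.2
  have key := qint_succ_mul_qint_sub_qint_mul_qint_succ (k := k) hq0 hq1 i (n - i)
  rw [Nat.cast_sub hi, show n - i + 1 = n + 1 - i by omega,
    show (n : ℤ) - i - i = n - 2 * i by ring, show (i : ℤ) - (n - i) = -(n - 2 * i) by ring,
    zpow_neg] at key
  simp only [LinearMap.add_apply, LinearMap.smul_apply, LinearMap.sub_apply, diagEnd_single,
    ← Finsupp.single_sub, smul_single, ← Finsupp.single_add, Pi.inv_apply, lWeight, mul_inv,
    inv_inv]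
  congr 1
  linear_combination (w * b) * key

def lAction (q w : k) (n : ℕ) : DGen → Module.End k (Fin (n + 1) →₀ k)
  | .E => lE k q w n
  | .F => lF k n
  | .K => lK k q w n
  | .Kinv => lKinv k q w n
  | .Kt => lKt k q w n
  | .Ktinv => lKtinv k q w n

lemma lAction_respects_DRel (hq0 : q ≠ 0) (hq1 : q ^ 2 ≠ 1) (hw : w ≠ 0)
    ⦃x y : FreeAlgebra k DGen⦄ (h : DRel k q x y) :
    FreeAlgebra.lift k (lAction q w n) x = FreeAlgebra.lift k (lAction q w n) y := by
  have hweight := lWeight_ne_zero (n := n) hq0 hw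
  have hweight' := lWeight_ne_zero (n := n) hq0 (inv_ne_zero hw)
  cases h <;>
    simp only [map_mul, map_smul, map_add, map_sub, map_one, FreeAlgebra.lift_ι_apply, lAction,
      lK_eq, lKinv_eq, lKt_eq, lKtinv_eq]
  · exact diagEnd_mul_eq_smul_mul (diagEnd_lWeight_lE hq0 w)
  · exact diagEnd_mul_eq_smul_mul (diagEnd_lWeight_lF hq0 w)
  · exact diagEnd_mul_eq_smul_mul (diagEnd_lWeight_lE hq0 w⁻¹)
  · exact diagEnd_mul_eq_smul_mul (diagEnd_lWeight_lF hq0 w⁻¹)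
  · exact diagEnd_mul_inv hweight
  · exact diagEnd_inv_mul hweight
  · exact diagEnd_mul_inv hweight'
  · exact diagEnd_inv_mul hweight'
  · exact diagEnd_mul_comm _ _
  · rw [← lK_eq, ← lKtinv_eq]
    exact lE_mul_lF_eq_lF_mul_lE_add hq0 hq1

lemma exists_LCond (hq0 : q ≠ 0) (hq1 : q ^ 2 ≠ 1) (hw : w ≠ 0) :
    ∃ ρ : Dq k q →ₐ[k] Module.End k (Fin (n + 1) →₀ k), LCond k q w n ρ :=
  ⟨RingQuot.liftAlgHom k
      ⟨FreeAlgebra.lift k (lAction q w n), lAction_respects_DRel hq0 hq1 hw⟩,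
    by simp [LCond, DE, DF, DK, DKinv, DKt, DKtinv, lAction]⟩

lemma Dq.algHom_ext {A : Type*} [Semiring A] [Algebra k A]
    {f g : Dq k q →ₐ[k] A}
    (hE : f (DE k q) = g (DE k q)) (hF : f (DF k q) = g (DF k q))
    (hK : f (DK k q) = g (DK k q)) (hKinv : f (DKinv k q) = g (DKinv k q))
    (hKt : f (DKt k q) = g (DKt k q)) (hKtinv : f (DKtinv k q) = g (DKtinv k q)) : f = g :=
  RingQuot.ringQuot_ext' _ _ _ <| FreeAlgebra.hom_ext <| funext fun x => by
    cases x <;> assumption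

lemma LCond.unique {ρ ρ' : Dq k q →ₐ[k] Module.End k (Fin (n + 1) →₀ k)}
    (h : LCond k q w n ρ) (h' : LCond k q w n ρ') : ρ = ρ' := by
  obtain ⟨hE, hF, hK, hKinv, hKt, hKtinv⟩ := h
  obtain ⟨hE', hF', hK', hKinv', hKt', hKtinv'⟩ := h'
  exact Dq.algHom_ext (hE.trans hE'.symm) (hF.trans hF'.symm) (hK.trans hK'.symm)
    (hKinv.trans hKinv'.symm) (hKt.trans hKt'.symm) (hKtinv.trans hKtinv'.symm)

lemma zpow_injective_of_pow_ne_one (hq0 : q ≠ 0) (hq : ∀ m : ℕ, 0 < m → q ^ m ≠ 1) :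
    Function.Injective fun z : ℤ => q ^ z := by
  have hfin : ¬IsOfFinOrder (Units.mk0 q hq0) := by
    rw [isOfFinOrder_iff_pow_eq_one]
    rintro ⟨m, hm, hqm⟩
    exact hq m hm (by simpa using congrArg Units.val hqm)
  intro a b hab
  refine injective_zpow_iff_not_isOfFinOrder.2 hfin (Units.ext ?_)
  simpa [Units.val_zpow_eq_zpow_val] using hab

lemma qint_ne_zero (hq0 : q ≠ 0) (hq : ∀ m : ℕ, 0 < m → q ^ m ≠ 1) {m : ℕ} (hm : 0 < m) :
    qint k q m ≠ 0 := by
  have hne (l : ℕ) (hl : 0 < l) : q ^ l - q⁻¹ ^ l ≠ 0 := by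
    rw [sub_ne_zero, inv_pow, ← zpow_natCast, ← zpow_neg]
    exact fun h => by have := zpow_injective_of_pow_ne_one hq0 hq h; omega
  exact div_ne_zero (hne m hm) (by simpa using hne 1 one_pos)

lemma lWeight_injective (hq0 : q ≠ 0) (hw : w ≠ 0) (hq : ∀ m : ℕ, 0 < m → q ^ m ≠ 1) :
    Function.Injective (lWeight q w n) := fun i j hij => by
  have := zpow_injective_of_pow_ne_one hq0 hq (mul_left_cancel₀ hw hij)
  exact Fin.ext (by omega)

lemma single_zero_mem_of_lE_mem (hq0 : q ≠ 0) (hw : w ≠ 0) (hq : ∀ m : ℕ, 0 < m → q ^ m ≠ 1)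
    {W : Submodule k (Fin (n + 1) →₀ k)} (hE : ∀ v ∈ W, lE k q w n v ∈ W)
    (i : Fin (n + 1)) (hi : single i 1 ∈ W) : single 0 1 ∈ W := by
  induction i using Fin.induction with
  | zero => exact hi
  | succ i ih =>
    apply ih
    have hc : w * qint k q (i + 1) * qint k q (n - i) ≠ 0 :=
      mul_ne_zero (mul_ne_zero hw (qint_ne_zero hq0 hq i.succ_pos))
        (qint_ne_zero hq0 hq (by omega))
    have hEi := hE _ hi
    rwa [lE_single_succ, mul_one, ← smul_single_one, Submodule.smul_mem_iff _ hc] at hEi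

lemma single_mem_of_lF_mem {W : Submodule k (Fin (n + 1) →₀ k)} (hF : ∀ v ∈ W, lF k n v ∈ W)
    (h0 : single 0 1 ∈ W) (i : Fin (n + 1)) : single i 1 ∈ W := by
  induction i using Fin.induction with
  | zero => exact h0
  | succ i ih => simpa [lF_single_castSucc] using hF _ ih

lemma LCond.eq_bot_or_eq_top (hq0 : q ≠ 0) (hw : w ≠ 0) (hq : ∀ m : ℕ, 0 < m → q ^ m ≠ 1)
    {ρ : Dq k q →ₐ[k] Module.End k (Fin (n + 1) →₀ k)} (hρ : LCond k q w n ρ)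
    {W : Submodule k (Fin (n + 1) →₀ k)} (hW : ∀ x : Dq k q, ∀ v ∈ W, ρ x v ∈ W) :
    W = ⊥ ∨ W = ⊤ := by
  obtain ⟨hE, hF, hK, -⟩ := hρ
  refine or_iff_not_imp_left.2 fun hne => ?_
  obtain ⟨v, hv, hv0⟩ := W.ne_bot_iff.1 hne
  obtain ⟨i, hi⟩ := Finsupp.support_nonempty_iff.2 hv0
  have hmi : single i 1 ∈ W := single_mem_of_mem_support (lWeight_injective hq0 hw hq)
    (fun v hv => by rw [← lK_eq, ← hK]; exact hW _ v hv) hv hi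
  have h0 := single_zero_mem_of_lE_mem hq0 hw hq (fun v hv => hE ▸ hW (DE k q) v hv) i hmi
  exact Submodule.eq_top_of_forall_single_mem
    (single_mem_of_lF_mem (fun v hv => hF ▸ hW (DF k q) v hv) h0)

end LModule

/-- the stated formulas define a (unique) `D_q`-module structure
`L(w,n)` on the `(n+1)`-dimensional space with basis `m_0, …, m_n`; if `q` is not
a root of unity then `L(w,n)` is a simple `D_q`-module. -/
theorem L_module_structure (k : Type) [Field k] (q w : k) (n : ℕ)
    (hq0 : q ≠ 0) (hq1 : q ^ 2 ≠ 1) (hw : w ≠ 0) :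
    (∃! ρ : Dq k q →ₐ[k] Module.End k (Fin (n + 1) →₀ k), LCond k q w n ρ) ∧
    ((∀ m : ℕ, 0 < m → q ^ m ≠ 1) →
      ∀ ρ : Dq k q →ₐ[k] Module.End k (Fin (n + 1) →₀ k), LCond k q w n ρ →
        ∀ W : Submodule k (Fin (n + 1) →₀ k),
          (∀ (x : Dq k q), ∀ v ∈ W, ρ x v ∈ W) → W = ⊥ ∨ W = ⊤) := by
  obtain ⟨ρ, hρ⟩ := exists_LCond (n := n) hq0 hq1 hw
  exact ⟨⟨ρ, hρ, fun _ h => h.unique hρ⟩,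
    fun hq _ h _ hW => h.eq_bot_or_eq_top hq0 hw hq hW⟩
end
end

section
/- Assume k is algebraically closed. Let ρ : D_q → End_k(V) be a finite-dimensional simple representation (V ≠ 0 and the only subspaces of V invariant under all operators ρ(x), x ∈ D_q, are 0 and V). Then there exist w ∈ k^× and a k-algebra homomorphism σ : U_q → End_k(V) such that ρ(E) = w·σ(E), ρ(F) = σ(F), ρ(K) = w·σ(K) and ρ(K̃) = w⁻¹·σ(K). The same conclusion holds if instead of simple, V is a nonzero finite-dimensional indecomposable D_q-module on which ρ(K) and ρ(K̃) are diagonalizable. -/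
noncomputable section

/-- Generators of `U_q(sl2)`. -/
inductive UGen : Type
  | E | F | K | Kinv
  deriving DecidableEq

/-- The defining relations of `U_q(sl2)`. -/
inductive URel (k : Type) [Field k] (q : k) :
    FreeAlgebra k UGen → FreeAlgebra k UGen → Prop
  | KE : URel k q (FreeAlgebra.ι k UGen.K * FreeAlgebra.ι k UGen.E)
      ((q ^ 2) • (FreeAlgebra.ι k UGen.E * FreeAlgebra.ι k UGen.K))
  | KF : URel k q (FreeAlgebra.ι k UGen.K * FreeAlgebra.ι k UGen.F)
      (((q ^ 2)⁻¹) • (FreeAlgebra.ι k UGen.F * FreeAlgebra.ι k UGen.K))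
  | KKinv : URel k q (FreeAlgebra.ι k UGen.K * FreeAlgebra.ι k UGen.Kinv) 1
  | KinvK : URel k q (FreeAlgebra.ι k UGen.Kinv * FreeAlgebra.ι k UGen.K) 1
  | EF : URel k q (FreeAlgebra.ι k UGen.E * FreeAlgebra.ι k UGen.F)
      (FreeAlgebra.ι k UGen.F * FreeAlgebra.ι k UGen.E +
        ((q - q⁻¹)⁻¹) • (FreeAlgebra.ι k UGen.K - FreeAlgebra.ι k UGen.Kinv))

/-- The quantized enveloping algebra `U_q(sl2)`. -/
abbrev Uq (k : Type) [Field k] (q : k) := RingQuot (URel k q)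

def UE (k : Type) [Field k] (q : k) : Uq k q :=
  RingQuot.mkAlgHom k (URel k q) (FreeAlgebra.ι k UGen.E)
def UF (k : Type) [Field k] (q : k) : Uq k q :=
  RingQuot.mkAlgHom k (URel k q) (FreeAlgebra.ι k UGen.F)
def UK (k : Type) [Field k] (q : k) : Uq k q :=
  RingQuot.mkAlgHom k (URel k q) (FreeAlgebra.ι k UGen.K)
def UKinv (k : Type) [Field k] (q : k) : Uq k q :=
  RingQuot.mkAlgHom k (URel k q) (FreeAlgebra.ι k UGen.Kinv)


/-! The element `K K̃⁻¹` of `D_q` is central: it commutes with `K^{±1}` and `K̃^{±1}` because these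
commute, and with `E` and `F` because conjugation by `K` and by `K̃` rescales each of them by the
same factor `q^{±2}`. So `ρ(K K̃⁻¹)` commutes with the whole representation. For `V` simple it is a
scalar by Schur's lemma; in the indecomposable case it is diagonalizable (a product of commuting
diagonalizable operators), and its eigenspaces are subrepresentations that decompose `V`, so again
it is a scalar `c`. Writing `c = w²`, `K̃⁻¹` acts as `w² K⁻¹`, and then `E ↦ w⁻¹ ρ(E)`, `F ↦ ρ(F)`,
`K ↦ w⁻¹ ρ(K)`, `K⁻¹ ↦ w ρ(K⁻¹)` satisfy the relations of `U_q`. -/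

namespace Module.End

variable {K V : Type*} [Field K] [AddCommGroup V] [Module K V]

lemma eq_smul_one_of_eigenspace_eq_top {f : End K V} {μ : K} (h : f.eigenspace μ = ⊤) :
    f = μ • 1 := by
  ext v
  simpa using mem_eigenspace_iff.mp (h ▸ Submodule.mem_top : v ∈ f.eigenspace μ)

lemma eigenspace_le_eigenspace_inv {f g : End K V} (hgf : g * f = 1) (μ : K) :
    f.eigenspace μ ≤ g.eigenspace μ⁻¹ := by
  intro v hv
  rw [mem_eigenspace_iff] at hv ⊢
  have hv' : v = μ • g v := by
    simpa [hv] using (LinearMap.congr_fun hgf v).symm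
  rcases eq_or_ne μ 0 with rfl | hμ
  · rw [zero_smul] at hv'
    simp [hv']
  · exact (eq_inv_smul_iff₀ hμ).mpr hv'.symm

lemma apply_mem_eigenspace_of_commute {f g : End K V} (h : Commute f g) (μ : K) :
    ∀ v ∈ f.eigenspace μ, g v ∈ f.eigenspace μ :=
  fun _ hv => mapsTo_genEigenspace_of_comm h μ 1 hv

lemma iSup_eigenspace_eq_top_of_mul_eq_one {f g : End K V} (hgf : g * f = 1)
    (hf : ⨆ μ, f.eigenspace μ = ⊤) : ⨆ μ, g.eigenspace μ = ⊤ :=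
  eq_top_iff.mpr <| hf.ge.trans <| iSup_le fun μ =>
    (eigenspace_le_eigenspace_inv hgf μ).trans (le_iSup (fun ν => g.eigenspace ν) μ⁻¹)

open Polynomial in
lemma isSemisimple_of_iSup_eigenspace_eq_top [FiniteDimensional K V] {f : End K V}
    (hf : ⨆ μ, f.eigenspace μ = ⊤) : f.IsSemisimple := by
  set s := f.finite_hasEigenvalue.toFinset
  have hsep : (∏ μ ∈ s, (X - C μ)).Separable := separable_prod_X_sub_C_iff'.mpr fun _ _ _ _ h => h
  refine isSemisimple_of_squarefree_aeval_eq_zero hsep.squarefree ?_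
  ext v
  have hv : v ∈ ⨆ μ, f.eigenspace μ := hf ▸ Submodule.mem_top
  induction hv using Submodule.iSup_induction' with
  | mem μ v hv =>
    rcases eq_or_ne v 0 with rfl | hv0
    · simp
    have hμ : μ ∈ s := f.finite_hasEigenvalue.mem_toFinset.mpr
      (hasEigenvalue_of_hasEigenvector ⟨hv, hv0⟩)
    rw [aeval_apply_of_mem_apply_eq_smul (mem_eigenspace_iff.mp hv), eval_prod,
      Finset.prod_eq_zero hμ (by simp), zero_smul, LinearMap.zero_apply]
  | zero => simp
  | add v w _ _ hv hw => simp [hv, hw]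

lemma iSup_eigenspace_mul_eq_top_of_commute [IsAlgClosed K] [FiniteDimensional K V]
    {f g : End K V} (hfg : Commute f g) (hf : ⨆ μ, f.eigenspace μ = ⊤)
    (hg : ⨆ μ, g.eigenspace μ = ⊤) : ⨆ μ, (f * g).eigenspace μ = ⊤ :=
  ((isSemisimple_of_iSup_eigenspace_eq_top hf).mul_of_commute hfg
    (isSemisimple_of_iSup_eigenspace_eq_top hg)).iSup_eigenspace_eq_top

end Module.End

section CommutingOperator

open Module End

variable {K V ι : Type*} [Field K] [AddCommGroup V] [Module K V] (ρ : ι → End K V)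
  {T : End K V}

lemma exists_eq_smul_one_of_commute_of_irreducible [IsAlgClosed K] [FiniteDimensional K V]
    [Nontrivial V] (hT : ∀ i, Commute T (ρ i))
    (hirr : ∀ W : Submodule K V, (∀ i, ∀ v ∈ W, ρ i v ∈ W) → W = ⊥ ∨ W = ⊤) :
    ∃ c : K, T = c • 1 := by
  obtain ⟨μ, hμ⟩ := exists_eigenvalue T
  exact ⟨μ, eq_smul_one_of_eigenspace_eq_top <|
    (hirr _ fun i => apply_mem_eigenspace_of_commute (hT i) μ).resolve_left hμ⟩

lemma exists_eq_smul_one_of_commute_of_indecomposable [Nontrivial V]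
    (hT : ∀ i, Commute T (ρ i)) (hdiag : ⨆ μ, T.eigenspace μ = ⊤)
    (hind : ¬ ∃ W₁ W₂ : Submodule K V,
      (∀ i, ∀ v ∈ W₁, ρ i v ∈ W₁) ∧ (∀ i, ∀ v ∈ W₂, ρ i v ∈ W₂) ∧
      W₁ ≠ ⊥ ∧ W₂ ≠ ⊥ ∧ W₁ ⊓ W₂ = ⊥ ∧ W₁ ⊔ W₂ = ⊤) :
    ∃ c : K, T = c • 1 := by
  obtain ⟨μ, hμ⟩ : ∃ μ, T.eigenspace μ ≠ ⊥ := by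
    by_contra! h
    simp [h] at hdiag
  set W := ⨆ ν, ⨆ _ : ν ≠ μ, T.eigenspace ν
  have hW : ∀ i, ∀ v ∈ W, ρ i v ∈ W := fun i => by
    suffices W ≤ W.comap (ρ i) from fun v hv => this hv
    exact iSup₂_le fun ν hν v hv => le_iSup₂ (f := fun ν (_ : ν ≠ μ) => T.eigenspace ν) ν hν
      (apply_mem_eigenspace_of_commute (hT i) ν v hv)
  have hsup : T.eigenspace μ ⊔ W = ⊤ := by
    rw [← iSup_split_single (fun ν => T.eigenspace ν) μ, hdiag]
  have hW0 : W = ⊥ := by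
    by_contra hW0
    exact hind ⟨_, W, fun i => apply_mem_eigenspace_of_commute (hT i) μ, hW, hμ, hW0,
      disjoint_iff.mp (T.eigenspaces_iSupIndep μ), hsup⟩
  rw [hW0, sup_bot_eq] at hsup
  exact ⟨μ, eq_smul_one_of_eigenspace_eq_top hsup⟩

end CommutingOperator

theorem RingQuot.commute_of_forall_commute_mkAlgHom_ι {R X : Type*} [CommSemiring R]
    {r : FreeAlgebra R X → FreeAlgebra R X → Prop} {c : RingQuot r}
    (h : ∀ x, Commute c (RingQuot.mkAlgHom R r (FreeAlgebra.ι R x))) (y : RingQuot r) :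
    Commute c y := by
  obtain ⟨a, rfl⟩ := RingQuot.mkAlgHom_surjective R r y
  induction a using FreeAlgebra.induction with
  | grade0 s => simpa using Algebra.commute_algebraMap_right s c
  | grade1 x => exact h x
  | mul a b ha hb => simpa only [map_mul] using ha.mul_right hb
  | add a b ha hb => simpa only [map_add] using ha.add_right hb

theorem commute_mul_inv_of_mul_eq_smul {R A : Type*} [CommSemiring R] [Semiring A] [Algebra R A]
    {p a : A} {u : Aˣ} {s : R} (hpu : Commute p u) (hp : p * a = s • (a * p))
    (hu : u * a = s • (a * u)) : Commute (p * ↑u⁻¹) a := by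
  refine (Units.mul_right_inj u).mp ?_
  calc ↑u * (p * ↑u⁻¹ * a) = p * a := by
        rw [← mul_assoc, ← mul_assoc, ← hpu.eq, mul_assoc p, Units.mul_inv, mul_one]
    _ = s • (a * p) := hp
    _ = u * a * p * ↑u⁻¹ := by
        rw [hu, smul_mul_assoc, smul_mul_assoc, mul_assoc a, ← hpu.eq]
        simp only [mul_assoc, Units.mul_inv, mul_one]
    _ = ↑u * (a * (p * ↑u⁻¹)) := by simp only [mul_assoc]

namespace Dq

variable {k : Type} [Field k] {q : k}

theorem DK_mul_DE : DK k q * DE k q = q ^ 2 • (DE k q * DK k q) := by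
  simpa only [DK, DE, map_mul, map_smul] using
    RingQuot.mkAlgHom_rel k (DRel.KE (k := k) (q := q))

theorem DK_mul_DF : DK k q * DF k q = (q ^ 2)⁻¹ • (DF k q * DK k q) := by
  simpa only [DK, DF, map_mul, map_smul] using
    RingQuot.mkAlgHom_rel k (DRel.KF (k := k) (q := q))

theorem DKt_mul_DE : DKt k q * DE k q = q ^ 2 • (DE k q * DKt k q) := by
  simpa only [DKt, DE, map_mul, map_smul] using
    RingQuot.mkAlgHom_rel k (DRel.KtE (k := k) (q := q))

theorem DKt_mul_DF : DKt k q * DF k q = (q ^ 2)⁻¹ • (DF k q * DKt k q) := by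
  simpa only [DKt, DF, map_mul, map_smul] using
    RingQuot.mkAlgHom_rel k (DRel.KtF (k := k) (q := q))

theorem DK_mul_DKinv : DK k q * DKinv k q = 1 := by
  simpa only [DK, DKinv, map_mul, map_one] using
    RingQuot.mkAlgHom_rel k (DRel.KKinv (k := k) (q := q))

theorem DKinv_mul_DK : DKinv k q * DK k q = 1 := by
  simpa only [DK, DKinv, map_mul, map_one] using
    RingQuot.mkAlgHom_rel k (DRel.KinvK (k := k) (q := q))

theorem DKt_mul_DKtinv : DKt k q * DKtinv k q = 1 := by
  simpa only [DKt, DKtinv, map_mul, map_one] using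
    RingQuot.mkAlgHom_rel k (DRel.KtKtinv (k := k) (q := q))

theorem DKtinv_mul_DKt : DKtinv k q * DKt k q = 1 := by
  simpa only [DKt, DKtinv, map_mul, map_one] using
    RingQuot.mkAlgHom_rel k (DRel.KtinvKt (k := k) (q := q))

theorem commute_DK_DKt : Commute (DK k q) (DKt k q) :=
  show DK k q * DKt k q = DKt k q * DK k q by
    simpa only [DK, DKt, map_mul] using RingQuot.mkAlgHom_rel k (DRel.KKt (k := k) (q := q))

theorem DE_mul_DF :
    DE k q * DF k q = DF k q * DE k q + (q - q⁻¹)⁻¹ • (DK k q - DKtinv k q) := by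
  simpa only [DE, DF, DK, DKtinv, map_mul, map_add, map_smul, map_sub] using
    RingQuot.mkAlgHom_rel k (DRel.EF (k := k) (q := q))

def DKUnit (k : Type) [Field k] (q : k) : (Dq k q)ˣ :=
  ⟨DK k q, DKinv k q, DK_mul_DKinv, DKinv_mul_DK⟩

def DKtUnit (k : Type) [Field k] (q : k) : (Dq k q)ˣ :=
  ⟨DKt k q, DKtinv k q, DKt_mul_DKtinv, DKtinv_mul_DKt⟩

theorem commute_DK_DKtinv : Commute (DK k q) (DKtinv k q) :=
  commute_DK_DKt.units_inv_right (u := DKtUnit k q)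

theorem isUnit_DK_mul_DKtinv : IsUnit (DK k q * DKtinv k q) :=
  (DKUnit k q * (DKtUnit k q)⁻¹).isUnit

theorem commute_DK_mul_DKtinv (x : Dq k q) : Commute (DK k q * DKtinv k q) x := by
  have hK : Commute (DK k q * DKtinv k q) (DK k q) :=
    (Commute.refl _).mul_left commute_DK_DKtinv.symm
  have hKt : Commute (DK k q * DKtinv k q) (DKt k q) :=
    commute_DK_DKt.mul_left (Commute.units_inv_left (u := DKtUnit k q) (Commute.refl _))
  refine RingQuot.commute_of_forall_commute_mkAlgHom_ι (fun g => ?_) x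
  cases g
  · exact commute_mul_inv_of_mul_eq_smul (u := DKtUnit k q) commute_DK_DKt DK_mul_DE DKt_mul_DE
  · exact commute_mul_inv_of_mul_eq_smul (u := DKtUnit k q) commute_DK_DKt DK_mul_DF DKt_mul_DF
  · exact hK
  · exact hK.units_inv_right (u := DKUnit k q)
  · exact hKt
  · exact hKt.units_inv_right (u := DKtUnit k q)

end Dq

namespace Uq

variable {k : Type} [Field k] {q : k} {A : Type*} [Ring A] [Algebra k A]

def lift (e f t t' : A) (hte : t * e = q ^ 2 • (e * t)) (htf : t * f = (q ^ 2)⁻¹ • (f * t))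
    (htt' : t * t' = 1) (ht't : t' * t = 1)
    (hef : e * f = f * e + (q - q⁻¹)⁻¹ • (t - t')) : Uq k q →ₐ[k] A :=
  RingQuot.liftAlgHom k ⟨FreeAlgebra.lift k fun
      | .E => e
      | .F => f
      | .K => t
      | .Kinv => t', fun _ _ h => by
    cases h <;> simpa only [map_mul, map_smul, map_add, map_sub, map_one, FreeAlgebra.lift_ι_apply]⟩

variable (e f t t' : A) (hte : t * e = q ^ 2 • (e * t)) (htf : t * f = (q ^ 2)⁻¹ • (f * t))
    (htt' : t * t' = 1) (ht't : t' * t = 1) (hef : e * f = f * e + (q - q⁻¹)⁻¹ • (t - t'))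

@[simp]
theorem lift_UE : lift e f t t' hte htf htt' ht't hef (UE k q) = e := by
  rw [lift, UE, RingQuot.liftAlgHom_mkAlgHom_apply, FreeAlgebra.lift_ι_apply]

@[simp]
theorem lift_UF : lift e f t t' hte htf htt' ht't hef (UF k q) = f := by
  rw [lift, UF, RingQuot.liftAlgHom_mkAlgHom_apply, FreeAlgebra.lift_ι_apply]

@[simp]
theorem lift_UK : lift e f t t' hte htf htt' ht't hef (UK k q) = t := by
  rw [lift, UK, RingQuot.liftAlgHom_mkAlgHom_apply, FreeAlgebra.lift_ι_apply]

end Uq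

namespace Dq

variable {k : Type} [Field k] {q : k} {A : Type*} [Ring A] [Algebra k A]

theorem exists_Uq_hom_of_DK_mul_DKtinv_eq (ρ : Dq k q →ₐ[k] A) {w : k} (hw : w ≠ 0)
    (hc : ρ (DK k q * DKtinv k q) = w ^ 2 • 1) :
    ∃ σ : Uq k q →ₐ[k] A,
      ρ (DE k q) = w • σ (UE k q) ∧ ρ (DF k q) = σ (UF k q) ∧
      ρ (DK k q) = w • σ (UK k q) ∧ ρ (DKt k q) = w⁻¹ • σ (UK k q) := by
  have hKtinv : ρ (DKtinv k q) = w • w • ρ (DKinv k q) := by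
    rw [← one_mul (DKtinv k q), ← DKinv_mul_DK, mul_assoc, map_mul, hc, mul_smul_one,
      pow_two, mul_smul]
  have hK : ρ (DK k q) = w • w • ρ (DKt k q) := by
    rw [← mul_one (DK k q), ← DKtinv_mul_DKt, ← mul_assoc, map_mul, hc, smul_one_mul,
      pow_two, mul_smul]
  refine ⟨Uq.lift (w⁻¹ • ρ (DE k q)) (ρ (DF k q)) (w⁻¹ • ρ (DK k q)) (w • ρ (DKinv k q))
    ?_ ?_ ?_ ?_ ?_, ?_⟩
  · rw [smul_mul_smul_comm, smul_mul_smul_comm, ← map_mul, ← map_mul, DK_mul_DE, map_smul,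
      smul_comm]
  · rw [smul_mul_assoc, mul_smul_comm, ← map_mul, ← map_mul, DK_mul_DF, map_smul, smul_comm]
  · rw [smul_mul_smul_comm, inv_mul_cancel₀ hw, one_smul, ← map_mul, DK_mul_DKinv, map_one]
  · rw [smul_mul_smul_comm, mul_inv_cancel₀ hw, one_smul, ← map_mul, DKinv_mul_DK, map_one]
  · rw [smul_mul_assoc, mul_smul_comm, ← map_mul, ← map_mul, DE_mul_DF, map_add, map_mul,
      map_smul, map_sub, hKtinv, smul_add, smul_comm w⁻¹ (q - q⁻¹)⁻¹, smul_sub,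
      inv_smul_smul₀ hw]
  · simp only [Uq.lift_UE, Uq.lift_UF, Uq.lift_UK, smul_inv_smul₀ hw, hK, inv_smul_smul₀ hw,
      and_self]

end Dq

theorem simple_Dq_rep_pullback_general (k : Type) [Field k] [IsAlgClosed k] (q : k)
    (V : Type) [AddCommGroup V] [Module k V] [FiniteDimensional k V] [Nontrivial V]
    (ρ : Dq k q →ₐ[k] Module.End k V)
    (hV :
      (∀ W : Submodule k V, (∀ (x : Dq k q), ∀ v ∈ W, ρ x v ∈ W) → W = ⊥ ∨ W = ⊤) ∨
      ((¬ ∃ W₁ W₂ : Submodule k V,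
          (∀ (x : Dq k q), ∀ v ∈ W₁, ρ x v ∈ W₁) ∧
          (∀ (x : Dq k q), ∀ v ∈ W₂, ρ x v ∈ W₂) ∧
          W₁ ≠ ⊥ ∧ W₂ ≠ ⊥ ∧ W₁ ⊓ W₂ = ⊥ ∧ W₁ ⊔ W₂ = ⊤) ∧
        (⨆ μ : k, (ρ (DK k q)).eigenspace μ) = ⊤ ∧
        (⨆ μ : k, (ρ (DKt k q)).eigenspace μ) = ⊤)) :
    ∃ w : k, w ≠ 0 ∧
      ∃ σ : Uq k q →ₐ[k] Module.End k V,
        ρ (DE k q) = w • σ (UE k q) ∧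
        ρ (DF k q) = σ (UF k q) ∧
        ρ (DK k q) = w • σ (UK k q) ∧
        ρ (DKt k q) = w⁻¹ • σ (UK k q) := by
  have hcentral : ∀ x, Commute (ρ (DK k q * DKtinv k q)) (ρ x) :=
    fun x => (Dq.commute_DK_mul_DKtinv x).map ρ
  obtain ⟨c, hc⟩ : ∃ c : k, ρ (DK k q * DKtinv k q) = c • 1 := by
    rcases hV with hirr | ⟨hind, hK, hKt⟩
    · exact exists_eq_smul_one_of_commute_of_irreducible ρ hcentral hirr
    · refine exists_eq_smul_one_of_commute_of_indecomposable ρ hcentral ?_ hind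
      have hKtinv : ⨆ μ : k, (ρ (DKtinv k q)).eigenspace μ = ⊤ :=
        Module.End.iSup_eigenspace_eq_top_of_mul_eq_one
          (by rw [← map_mul, Dq.DKtinv_mul_DKt, map_one]) hKt
      rw [map_mul]
      exact Module.End.iSup_eigenspace_mul_eq_top_of_commute
        (Dq.commute_DK_DKtinv.map ρ) hK hKtinv
  obtain ⟨w, rfl⟩ := IsAlgClosed.exists_pow_nat_eq c two_pos
  have hw : w ≠ 0 := by
    rintro rfl
    simpa [hc] using Dq.isUnit_DK_mul_DKtinv.map ρ
  exact ⟨w, hw, Dq.exists_Uq_hom_of_DK_mul_DKtinv_eq ρ hw hc⟩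

/-- over an algebraically closed field, every finite-dimensional simple
representation of `D_q` — and likewise every finite-dimensional indecomposable one on
which `K` and `K̃` act diagonalizably — is the pullback (twisted by a scalar `w`) of a
representation of `U_q`. -/
theorem simple_Dq_rep_pullback (k : Type) [Field k] [IsAlgClosed k] (q : k)
    (hq0 : q ≠ 0) (hq1 : q ^ 2 ≠ 1)
    (V : Type) [AddCommGroup V] [Module k V] [FiniteDimensional k V] [Nontrivial V]
    (ρ : Dq k q →ₐ[k] Module.End k V)
    (hV :
      (∀ W : Submodule k V, (∀ (x : Dq k q), ∀ v ∈ W, ρ x v ∈ W) → W = ⊥ ∨ W = ⊤) ∨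
      ((¬ ∃ W₁ W₂ : Submodule k V,
          (∀ (x : Dq k q), ∀ v ∈ W₁, ρ x v ∈ W₁) ∧
          (∀ (x : Dq k q), ∀ v ∈ W₂, ρ x v ∈ W₂) ∧
          W₁ ≠ ⊥ ∧ W₂ ≠ ⊥ ∧ W₁ ⊓ W₂ = ⊥ ∧ W₁ ⊔ W₂ = ⊤) ∧
        (⨆ μ : k, (ρ (DK k q)).eigenspace μ) = ⊤ ∧
        (⨆ μ : k, (ρ (DKt k q)).eigenspace μ) = ⊤)) :
    ∃ w : k, w ≠ 0 ∧
      ∃ σ : Uq k q →ₐ[k] Module.End k V,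
        ρ (DE k q) = w • σ (UE k q) ∧
        ρ (DF k q) = σ (UF k q) ∧
        ρ (DK k q) = w • σ (UK k q) ∧
        ρ (DKt k q) = w⁻¹ • σ (UK k q) :=
  simple_Dq_rep_pullback_general k q V ρ hV
end
end

section
/- Let M be the d² × d² matrix with rows and columns indexed by pairs (a,b) with 0 ≤ a, b ≤ d−1, whose ((a,b),(a',b'))-entry is δ_{a,a'} · q^{−2bb'} · [a]_q! · (1/(1−q²))^a. (This is the Gram matrix, in the monomial bases {E^aK^b} and {F^{a'}K^{b'}}, of the skew Hopf pairing between the d²-dimensional quotient Hopf algebras Ū_q^{≥0} = U_q^{≥0}/(E^d, K^d−1) and Ū_q^{≤0} = U_q^{≤0}/(F^d, K^d−1).) Then M is invertible; equivalently, if scalars λ_{a,b} ∈ k (0 ≤ a, b < d) satisfy Σ_{0≤b<d} λ_{a',b} · q^{−2bb'} · [a']_q! · (1/(1−q²))^{a'} = 0 for all 0 ≤ a', b' < d, then λ_{a,b} = 0 for all a, b. -/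
noncomputable section

/-- The Gram matrix of the skew Hopf pairing between the `d²`-dimensional quotient
Hopf algebras `Ū_q^{≥0}` and `Ū_q^{≤0}` in the monomial bases `{E^a K^b}`, `{F^{a'} K^{b'}}`:
its `((a,b),(a',b'))`-entry is `δ_{a,a'}·q^{−2bb'}·[a]_q!·(1/(1−q²))^a`. -/
def gramM (k : Type) [Field k] (q : k) (d : ℕ) :
    Matrix (Fin d × Fin d) (Fin d × Fin d) k :=
  fun p p' =>
    if p.1 = p'.1 then
      q ^ (-(2 * ((p.2 : ℕ) : ℤ) * ((p'.2 : ℕ) : ℤ))) * qfact k q (p.1 : ℕ) *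
        ((1 - q ^ 2)⁻¹) ^ ((p.1 : ℕ))
    else 0

/-! The Gram matrix is the Kronecker product of the diagonal matrix of weights
`[a]_q!·(1 − q²)⁻ᵃ` with the Vandermonde matrix of the nodes `q⁻²ᵇ`. Since `q²` is a primitive
`d`-th root of unity, the weights are nonzero and the nodes are distinct for `a, b < d`. -/

open Matrix
open scoped Kronecker

theorem zpow_neg_two_mul_mul {G : Type*} [DivisionMonoid G] (x : G) (b b' : ℕ) :
    x ^ (-(2 * (b : ℤ) * b')) = ((x ^ 2)⁻¹ ^ b) ^ b' := by
  rw [show -(2 * (b : ℤ) * b') = -((2 * b * b' : ℕ) : ℤ) by push_cast; ring, _root_.zpow_neg,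
    zpow_natCast, pow_mul, pow_mul, ← inv_pow, ← inv_pow]

section GramMatrix

variable {k : Type} [Field k] {q : k} {d : ℕ}

theorem pow_sub_inv_pow_ne_zero (hq0 : q ≠ 0) {n : ℕ} (hn : (q ^ 2) ^ n ≠ 1) :
    q ^ n - q⁻¹ ^ n ≠ 0 := by
  rw [sub_ne_zero, inv_pow]
  intro h
  apply hn
  rw [← pow_mul, mul_comm, pow_mul, sq]
  nth_rw 1 [h]
  exact inv_mul_cancel₀ (pow_ne_zero n hq0)

theorem qint_ne_zero_s16 (hq : IsPrimitiveRoot (q ^ 2) d) {n : ℕ} (hn0 : 0 < n) (hnd : n < d) :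
    qint k q n ≠ 0 := by
  have hq0 : q ≠ 0 := pow_ne_zero_iff two_ne_zero |>.mp (hq.ne_zero (by omega))
  have hsub : q - q⁻¹ ≠ 0 := by
    simpa using pow_sub_inv_pow_ne_zero hq0 (hq.pow_ne_one_of_pos_of_lt one_ne_zero (by omega))
  exact div_ne_zero (pow_sub_inv_pow_ne_zero hq0 (hq.pow_ne_one_of_pos_of_lt hn0.ne' hnd)) hsub

theorem qfact_ne_zero (hq : IsPrimitiveRoot (q ^ 2) d) {n : ℕ} (hn : n < d) :
    qfact k q n ≠ 0 := by
  induction n with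
  | zero => simp [qfact]
  | succ n ih => exact mul_ne_zero (ih (by omega)) (qint_ne_zero_s16 hq n.succ_pos hn)

variable (k q) in
def gramWeight (a : ℕ) : k := qfact k q a * (1 - q ^ 2)⁻¹ ^ a

theorem gramWeight_ne_zero (hq : IsPrimitiveRoot (q ^ 2) d) {a : ℕ} (ha : a < d) :
    gramWeight k q a ≠ 0 := by
  refine mul_ne_zero (qfact_ne_zero hq ha) ?_
  rcases Nat.eq_zero_or_pos a with rfl | ha0
  · simp
  · exact pow_ne_zero a (inv_ne_zero (sub_ne_zero.mpr (hq.ne_one (by omega)).symm))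

variable (k q d) in
theorem gramM_eq_kronecker :
    gramM k q d = diagonal (fun a : Fin d => gramWeight k q a) ⊗ₖ
      vandermonde (fun b : Fin d => (q ^ 2)⁻¹ ^ (b : ℕ)) := by
  ext ⟨a, b⟩ ⟨a', b'⟩
  by_cases h : a = a'
  · subst h
    simp only [gramM, kronecker_apply, diagonal_apply_eq, vandermonde_apply, gramWeight, if_true,
      zpow_neg_two_mul_mul]
    ring
  · simp [gramM, h]

theorem isUnit_gramM (hq : IsPrimitiveRoot (q ^ 2) d) : IsUnit (gramM k q d) := by
  rw [gramM_eq_kronecker]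
  refine IsUnit.kronecker (isUnit_diagonal.mpr (Pi.isUnit_iff.mpr fun a => ?_)) ?_
  · exact (gramWeight_ne_zero hq a.2).isUnit
  · rw [isUnit_iff_isUnit_det, isUnit_iff_ne_zero, det_vandermonde_ne_zero_iff]
    exact fun i j h => Fin.ext (hq.inv.pow_inj i.2 j.2 h)

theorem vecMul_gramM_apply (x : Fin d × Fin d → k) (a' b' : Fin d) :
    (x ᵥ* gramM k q d) (a', b') = ∑ b : Fin d,
      x (a', b) * q ^ (-(2 * ((b : ℕ) : ℤ) * ((b' : ℕ) : ℤ))) * qfact k q (a' : ℕ) *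
        ((1 - q ^ 2)⁻¹) ^ ((a' : ℕ)) := by
  simp [vecMul, dotProduct, Fintype.sum_prod_type, gramM, mul_assoc]

end GramMatrix

theorem gram_matrix_invertible_general (k : Type) [Field k] (q : k) (d : ℕ)
    (hq : IsPrimitiveRoot (q ^ 2) d) :
    IsUnit (gramM k q d) ∧
    (∀ lam : Fin d → Fin d → k,
      (∀ a' b' : Fin d,
        ∑ b : Fin d,
          lam a' b * q ^ (-(2 * ((b : ℕ) : ℤ) * ((b' : ℕ) : ℤ))) * qfact k q (a' : ℕ) *
            ((1 - q ^ 2)⁻¹) ^ ((a' : ℕ)) = 0) →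
      ∀ a b : Fin d, lam a b = 0) := by
  refine ⟨isUnit_gramM hq, fun lam hlam a b => ?_⟩
  have hvecMul : (fun p : Fin d × Fin d => lam p.1 p.2) ᵥ* gramM k q d = 0 ᵥ* gramM k q d := by
    ext ⟨a', b'⟩
    rw [vecMul_gramM_apply, zero_vecMul]
    exact hlam a' b'
  exact congrFun (vecMul_injective_of_isUnit (isUnit_gramM hq) hvecMul) (a, b)

/-- if `q²` is a primitive `d`-th root of unity (`d > 1`), the Gram matrix
of the skew Hopf pairing is invertible; equivalently the corresponding homogeneous linear
system has only the trivial solution. -/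
theorem gram_matrix_invertible (k : Type) [Field k] (q : k) (d : ℕ)
    (hd : 1 < d) (hq0 : q ≠ 0) (hq : IsPrimitiveRoot (q ^ 2) d) :
    IsUnit (gramM k q d) ∧
    (∀ lam : Fin d → Fin d → k,
      (∀ a' b' : Fin d,
        ∑ b : Fin d,
          lam a' b * q ^ (-(2 * ((b : ℕ) : ℤ) * ((b' : ℕ) : ℤ))) * qfact k q (a' : ℕ) *
            ((1 - q ^ 2)⁻¹) ^ ((a' : ℕ)) = 0) →
      ∀ a b : Fin d, lam a b = 0) :=
  gram_matrix_invertible_general k q d hq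
end
end
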